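/- arXiv:1804.05746 — 6 statements merged into one kernel-verified Lean document; each statement's English description precedes it below -/
import Mathlib

section
/- For every integer β ≥ 1, the polynomial U(s) = ∑_{y=1}^s y^{2β} − s ∑_{y=1}^s y^{2β−1} (viewed as a polynomial in s via Faulhaber's formula) is an odd polynomial in s. -/
/-!
The Bernoulli polynomials satisfy `Bₙ(1 - x) = (-1)ⁿ Bₙ(x)` and `Bₙ(1 + x) = Bₙ(x) + n xⁿ⁻¹`, and
`Bₙ = 0` for odd `n > 1`. Hence for `m ≥ 1` the power sum polynomial `Sₘ` obeys the reflection
`Sₘ(-s) = (-1)^(m+1) (Sₘ(s) - sᵐ)`. For `m = 2β` and `m = 2β - 1` this gives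
`U(-s) = -S_{2β}(s) + s^{2β} + s (S_{2β-1}(s) - s^{2β-1}) = -U(s)`.
-/

open Polynomial

/-- The power sum `∑_{y=1}^N y^m` as a polynomial in `N`, via Faulhaber's formula. -/
noncomputable def powerSumPoly (m : ℕ) : Polynomial ℚ :=
  C (1 / (m + 1 : ℚ)) * ((Polynomial.bernoulli (m+1)).comp (X + 1) - C (_root_.bernoulli (m+1)))

theorem neg_one_pow_mul_bernoulli {n : ℕ} (hn : n ≠ 1) :
    (-1 : ℚ) ^ n * _root_.bernoulli n = _root_.bernoulli n := by
  rcases n.even_or_odd with h | h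
  · rw [h.neg_one_pow, one_mul]
  · rw [bernoulli_eq_zero_of_odd h (by grind), mul_zero]

theorem powerSumPoly_comp_neg_X {m : ℕ} (hm : m ≠ 0) :
    (powerSumPoly m).comp (-X) = (-1) ^ (m + 1) * (powerSumPoly m - X ^ m) := by
  have hB : (Polynomial.bernoulli (m + 1)).comp (X + 1)
      = Polynomial.bernoulli (m + 1) + C ((m : ℚ) + 1) * X ^ m := by
    rw [add_comm X, bernoulli_comp_one_add_X, nsmul_eq_mul, Nat.add_sub_cancel]
    simp
  have hreflect : ((Polynomial.bernoulli (m + 1)).comp (X + 1)).comp (-X)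
      = (-1) ^ (m + 1) * Polynomial.bernoulli (m + 1) := by
    rw [comp_assoc, add_comp, X_comp, one_comp, neg_add_eq_sub, bernoulli_comp_one_sub_X]
  have hconst : ((-1) ^ (m + 1) : ℚ[X]) * C (_root_.bernoulli (m + 1))
      = C (_root_.bernoulli (m + 1)) := by
    rw [← C_1, ← C_neg, ← C_pow, ← C_mul, neg_one_pow_mul_bernoulli (by omega)]
  have hinv : C (1 / ((m : ℚ) + 1)) * C ((m : ℚ) + 1) = 1 := by
    rw [← C_mul, one_div_mul_cancel (by positivity), C_1]
  rw [powerSumPoly, mul_comp, sub_comp, C_comp, C_comp, hreflect, hB]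
  linear_combination C (1 / ((m : ℚ) + 1)) * hconst - (-1) ^ (m + 1) * X ^ m * hinv

/-- `U(s) = ∑_{y=1}^s y^{2β} − s ∑_{y=1}^s y^{2β−1}` is an odd polynomial in `s`. -/
theorem U_odd (β : ℕ) (hβ : 1 ≤ β) :
    (powerSumPoly (2*β) - X * powerSumPoly (2*β - 1)).comp (-X)
      = -(powerSumPoly (2*β) - X * powerSumPoly (2*β - 1)) := by
  have hsucc : 2 * β - 1 + 1 = 2 * β := by omega
  have hodd : (-1 : ℚ[X]) ^ (2 * β + 1) = -1 := by simp [pow_succ, pow_mul]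
  have heven : (-1 : ℚ[X]) ^ (2 * β - 1 + 1) = 1 := by simp [hsucc, pow_mul]
  have hXpow : X * X ^ (2 * β - 1) = (X ^ (2 * β) : ℚ[X]) := by rw [← pow_succ', hsucc]
  rw [sub_comp, mul_comp, X_comp, powerSumPoly_comp_neg_X (by omega),
    powerSumPoly_comp_neg_X (by omega), hodd, heven]
  linear_combination (-1 : ℚ[X]) * hXpow
end

section
/- For every integer β ≥ 1, setting d = (p−1)/2, the quantity V(p) = p ∑_{y=1}^d y^{2β−1} − 2 ∑_{y=1}^d y^{2β}, viewed as a polynomial in p (via Faulhaber's formula with N = (p−1)/2), is an odd polynomial in p. -/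
/-! The substitution `p ↦ -p` turns `N = (p - 1)/2` into `-1 - N`, and the reflection
`B_n(1 - x) = (-1)^n B_n(x)` of the Bernoulli polynomials shows that `N ↦ -1 - N` fixes
`∑_{y=1}^N y^m` for odd `m` and negates it for even `m > 0` (where `B_{m+1} = 0`). Hence
`∑ y^{2β-1}` is even and `∑ y^{2β}` is odd in `p`, so `p ∑ y^{2β-1} - 2 ∑ y^{2β}` is odd. -/

open Polynomial

theorem powerSumPoly_comp_neg_sub_one (m : ℕ) :
    (powerSumPoly m).comp (-X - 1) = C (1 / (m + 1 : ℚ)) *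
      ((-1) ^ (m + 1) * (Polynomial.bernoulli (m + 1)).comp (X + 1)
        - C (_root_.bernoulli (m + 1))) := by
  have reflect : ((Polynomial.bernoulli (m + 1)).comp (X + 1)).comp (-X - 1)
      = ((Polynomial.bernoulli (m + 1)).comp (1 - X)).comp (X + 1) := by
    simp only [comp_assoc, add_comp, sub_comp, X_comp, one_comp]
    ring_nf
  rw [powerSumPoly, mul_comp, sub_comp, C_comp, C_comp, reflect,
    bernoulli_comp_one_sub_X, mul_comp, pow_comp, neg_comp, one_comp]

theorem powerSumPoly_comp_neg_sub_one_of_odd {m : ℕ} (hm : Odd m) :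
    (powerSumPoly m).comp (-X - 1) = powerSumPoly m := by
  rw [powerSumPoly_comp_neg_sub_one, hm.add_one.neg_one_pow, one_mul, powerSumPoly]

theorem powerSumPoly_comp_neg_sub_one_of_even {m : ℕ} (hm : Even m) (hm₀ : m ≠ 0) :
    (powerSumPoly m).comp (-X - 1) = -powerSumPoly m := by
  rw [powerSumPoly_comp_neg_sub_one, powerSumPoly, hm.add_one.neg_one_pow,
    bernoulli_eq_zero_of_odd hm.add_one (by omega), C_0, sub_zero, sub_zero]
  ring

theorem comp_half_sub_one_comp_neg {K : Type*} [Field K] [NeZero (2 : K)] (f : K[X]) :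
    (f.comp (C (1 / 2) * (X - 1))).comp (-X) = (f.comp (-X - 1)).comp (C (1 / 2) * (X - 1)) := by
  rw [comp_assoc, comp_assoc]
  congr 1
  have two_halves : (2 : K[X]) * C (1 / 2) = 1 := by
    rw [← C_ofNat, ← C_mul, mul_one_div_cancel two_ne_zero, C_1]
  simp only [mul_comp, C_comp, sub_comp, X_comp, one_comp, neg_comp]
  linear_combination (-1 : K[X]) * two_halves

/-- `V(p) = p ∑_{y=1}^{(p−1)/2} y^{2β−1} − 2 ∑_{y=1}^{(p−1)/2} y^{2β}`, viewed as a
polynomial in `p` by substituting `N = (p−1)/2` in Faulhaber's formula, is an odd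
polynomial in `p`. -/
theorem V_odd (β : ℕ) (hβ : 1 ≤ β) :
    (X * (powerSumPoly (2*β - 1)).comp (C (1/2 : ℚ) * (X - 1))
        - 2 * (powerSumPoly (2*β)).comp (C (1/2 : ℚ) * (X - 1))).comp (-X)
      = -(X * (powerSumPoly (2*β - 1)).comp (C (1/2 : ℚ) * (X - 1))
        - 2 * (powerSumPoly (2*β)).comp (C (1/2 : ℚ) * (X - 1))) := by
  have hodd := powerSumPoly_comp_neg_sub_one_of_odd (m := 2 * β - 1) ⟨β - 1, by omega⟩
  have heven := powerSumPoly_comp_neg_sub_one_of_even (even_two_mul β) (by omega)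
  simp only [sub_comp, mul_comp, X_comp, ofNat_comp, comp_half_sub_one_comp_neg, hodd, heven,
    neg_comp]
  ring
end

section
/- Let β ≥ 1 and K_{s,y} = (p − 2·max(s,y))·min(s,y). Then ∑_{y=1}^{(p−1)/2} K_{s,y} y^{2β−1}, viewed as a polynomial function of p and s, equals p times a polynomial in p and s that is even in p and odd in s. -/
/-!
Let `k = 2β - 1`, `m = (p - 1) / 2`, and let `S_j` be Faulhaber's polynomial,
`S_j(n) = ∑_{y=1}^n y^j`. Since `max(s,y) · min(s,y) = s·y`, the sum equals
`p · (S_{k+1}(s) - s·S_k(s) + s·S_k(m)) - 2s · S_{k+1}(m)`.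
The reflection `B_j(1 - x) = (-1)^j B_j(x)` of the Bernoulli polynomials gives
`S_j(-x) = (-1)^(j+1) S_j(x - 1)`. Hence `S_{k+1}(s) - s·S_k(s)` is odd in `s`, and in terms of
`p = 2m + 1` the polynomial `S_k(m)` is even while `S_{k+1}(m)` is odd, so `S_{k+1}(m) = p·T(p)`
with `T` even. Then `Q(p, s) = S_{k+1}(s) - s·S_k(s) + s·(S_k(m) - 2T(p))`.
-/

open Polynomial Finset

noncomputable def powerSum (n : ℕ) : ℚ[X] :=
  C ((n + 1 : ℚ)⁻¹) * ((Polynomial.bernoulli (n + 1)).comp (X + 1) - C (_root_.bernoulli (n + 1)))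

lemma powerSum_eval (n : ℕ) (x : ℚ) :
    (powerSum n).eval x =
      ((Polynomial.bernoulli (n + 1)).eval (x + 1) - _root_.bernoulli (n + 1)) / (n + 1) := by
  simp only [powerSum, eval_mul, eval_C, eval_sub, eval_comp, eval_add, eval_X, eval_one]
  ring

lemma powerSum_eval_natCast {n : ℕ} (hn : n ≠ 0) (m : ℕ) :
    (powerSum n).eval (m : ℚ) = ∑ y ∈ Icc 1 m, (y : ℚ) ^ n := by
  have h := sum_range_pow_eq_bernoulli_sub (m + 1) n
  rw [Nat.range_succ_eq_Icc_zero, ← sum_Ioc_add_eq_sum_Icc (Nat.zero_le m),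
    ← Icc_add_one_left_eq_Ioc, zero_add] at h
  rw [powerSum_eval]
  push_cast [Nat.succ_eq_add_one, zero_pow hn, add_zero] at h
  field_simp
  linear_combination -h

lemma powerSum_eval_sub_eval_sub_one (n : ℕ) (x : ℚ) :
    (powerSum n).eval x - (powerSum n).eval (x - 1) = x ^ n := by
  have h := bernoulli_eval_one_add (n + 1) x
  rw [powerSum_eval, powerSum_eval, sub_add_cancel, add_comm x]
  push_cast at h
  field_simp
  linear_combination h

lemma powerSum_eval_neg {n : ℕ} (hn : n ≠ 0) (x : ℚ) :
    (powerSum n).eval (-x) = (-1) ^ (n + 1) * (powerSum n).eval (x - 1) := by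
  have hb : (-1) ^ (n + 1) * _root_.bernoulli (n + 1) = _root_.bernoulli (n + 1) := by
    rcases Nat.even_or_odd (n + 1) with h | h
    · rw [h.neg_one_pow, one_mul]
    · rw [bernoulli_eq_zero_of_odd h (by omega), mul_zero]
  rw [powerSum_eval, powerSum_eval, sub_add_cancel, neg_add_eq_sub, bernoulli_eval_one_sub]
  linear_combination hb / (n + 1)

lemma powerSum_succ_sub_X_mul_eval_neg {k : ℕ} (hk : k ≠ 0) (x : ℚ) :
    (powerSum (k + 1) - X * powerSum k).eval (-x) =
      (-1) ^ k * (powerSum (k + 1) - X * powerSum k).eval x := by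
  simp only [eval_sub, eval_mul, eval_X]
  rw [powerSum_eval_neg k.add_one_ne_zero, powerSum_eval_neg hk]
  linear_combination (-1) ^ k * (x * powerSum_eval_sub_eval_sub_one k x
    - powerSum_eval_sub_eval_sub_one (k + 1) x)

noncomputable def halfShift (P : ℚ[X]) : ℚ[X] :=
  P.comp (C 2⁻¹ * (X - 1))

lemma halfShift_eval (P : ℚ[X]) (x : ℚ) : (halfShift P).eval x = P.eval ((x - 1) / 2) := by
  rw [halfShift, eval_comp]
  congr 1
  simp only [eval_mul, eval_C, eval_sub, eval_X, eval_one]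
  ring

lemma halfShift_eval_two_mul_add_one (P : ℚ[X]) (m : ℕ) :
    (halfShift P).eval ((2 * m + 1 : ℕ) : ℚ) = P.eval (m : ℚ) := by
  rw [halfShift_eval]
  push_cast
  ring_nf

lemma halfShift_powerSum_eval_neg {n : ℕ} (hn : n ≠ 0) (x : ℚ) :
    (halfShift (powerSum n)).eval (-x) = (-1) ^ (n + 1) * (halfShift (powerSum n)).eval x := by
  rw [halfShift_eval, halfShift_eval, show (-x - 1) / 2 = -((x + 1) / 2) by ring,
    powerSum_eval_neg hn]
  ring_nf

lemma exists_eq_X_mul_of_eval_neg_eq_neg {R : Type*} [CommRing R] [IsDomain R] [CharZero R]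
    {g : R[X]} (hg : ∀ x, g.eval (-x) = -g.eval x) :
    ∃ T : R[X], g = X * T ∧ ∀ x, T.eval (-x) = T.eval x := by
  have h0 : g.eval 0 = 0 := CharZero.neg_eq_self_iff.mp (by simpa using (hg 0).symm)
  obtain ⟨T, rfl⟩ : X ∣ g := X_dvd_iff.mpr (by rwa [coeff_zero_eq_eval_zero])
  refine ⟨T, rfl, fun x => ?_⟩
  rcases eq_or_ne x 0 with rfl | hx
  · rw [neg_zero]
  · have h := hg x
    simp only [eval_mul, eval_X] at h
    exact mul_left_cancel₀ (neg_ne_zero.mpr hx) (by rw [h]; ring)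

lemma sum_kernel_mul_pow (p : ℚ) (s m k : ℕ) :
    ∑ y ∈ Icc 1 m, (p - 2 * (max s y : ℕ)) * (min s y : ℕ) * (y : ℚ) ^ k =
      p * ∑ y ∈ Icc 1 m, ((min s y : ℕ) : ℚ) * (y : ℚ) ^ k
        - 2 * s * ∑ y ∈ Icc 1 m, (y : ℚ) ^ (k + 1) := by
  rw [mul_sum, mul_sum, ← sum_sub_distrib]
  refine sum_congr rfl fun y _ => ?_
  have h : ((max s y : ℕ) : ℚ) * (min s y : ℕ) = s * y := by exact_mod_cast max_mul_min s y
  linear_combination (-2 * (y : ℚ) ^ k) * h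

lemma sum_min_mul_pow {s m : ℕ} (hs : s ≤ m) (k : ℕ) :
    ∑ y ∈ Icc 1 m, ((min s y : ℕ) : ℚ) * (y : ℚ) ^ k =
      ∑ y ∈ Icc 1 s, (y : ℚ) ^ (k + 1)
        + s * (∑ y ∈ Icc 1 m, (y : ℚ) ^ k - ∑ y ∈ Icc 1 s, (y : ℚ) ^ k) := by
  have split (f : ℕ → ℚ) : ∑ y ∈ Icc 1 m, f y = ∑ y ∈ Icc 1 s, f y + ∑ y ∈ Ioc s m, f y :=
    (sum_Ioc_consecutive f (Nat.zero_le s) hs).symm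
  rw [split, split (fun y => (y : ℚ) ^ k), add_sub_cancel_left, mul_sum]
  congr 1 <;> refine sum_congr rfl fun y hy => ?_
  · rw [min_eq_right (mem_Icc.mp hy).2, pow_succ']
  · rw [min_eq_left (mem_Ioc.mp hy).1.le]

lemma kernel_sum_eq_powerSum {k s m : ℕ} (hk : k ≠ 0) (hs : s ≤ m) (p : ℚ) :
    ∑ y ∈ Icc 1 m, (p - 2 * (max s y : ℕ)) * (min s y : ℕ) * (y : ℚ) ^ k =
      p * ((powerSum (k + 1) - X * powerSum k).eval (s : ℚ) + s * (powerSum k).eval (m : ℚ))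
        - 2 * s * (powerSum (k + 1)).eval (m : ℚ) := by
  rw [sum_kernel_mul_pow, sum_min_mul_pow hs, eval_sub, eval_mul, eval_X]
  simp only [← powerSum_eval_natCast hk, ← powerSum_eval_natCast k.add_one_ne_zero]
  ring

/-- `∑_{y=1}^{(p−1)/2} K_{s,y} y^{2β−1}` equals `p` times a two-variable polynomial
`Q(p,s)` which is even in `p` and odd in `s`. -/
theorem kernel_sum_p_even_s_odd (β : ℕ) (hβ : 1 ≤ β) :
    ∃ Q : MvPolynomial (Fin 2) ℚ,
      (∀ a b : ℚ, MvPolynomial.eval ![-a, b] Q = MvPolynomial.eval ![a, b] Q) ∧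
      (∀ a b : ℚ, MvPolynomial.eval ![a, -b] Q = -MvPolynomial.eval ![a, b] Q) ∧
      ∀ p s : ℕ, Odd p → 3 ≤ p → 1 ≤ s → s ≤ (p - 1) / 2 →
        ∑ y ∈ Finset.Icc 1 ((p - 1) / 2),
            ((p : ℚ) - 2 * (max s y : ℕ)) * (min s y : ℕ) * (y : ℚ)^(2*β - 1)
          = (p : ℚ) * MvPolynomial.eval ![(p : ℚ), (s : ℚ)] Q := by
  set k := 2 * β - 1
  have hk : k ≠ 0 := by omega
  have hk_odd : Odd k := ⟨β - 1, by omega⟩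
  obtain ⟨T, hgT, hT⟩ := exists_eq_X_mul_of_eval_neg_eq_neg
      (g := halfShift (powerSum (k + 1))) fun x => by
    have h_odd : Odd (k + 1 + 1) := hk_odd.add_even even_two
    rw [halfShift_powerSum_eval_neg k.add_one_ne_zero x, h_odd.neg_one_pow, neg_one_mul]
  set U := halfShift (powerSum k) - 2 * T
  set Q : MvPolynomial (Fin 2) ℚ :=
    toMvPolynomial 1 (powerSum (k + 1) - X * powerSum k) + MvPolynomial.X 1 * toMvPolynomial 0 U
  have hQ (a b : ℚ) : MvPolynomial.eval ![a, b] Q =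
      (powerSum (k + 1) - X * powerSum k).eval b + b * U.eval a := by
    simp [Q, MvPolynomial.eval_toMvPolynomial]
  refine ⟨Q, fun a b => ?_, fun a b => ?_, fun p s hp _ _ hs => ?_⟩
  · simp only [hQ, U, eval_sub, eval_mul, eval_ofNat, hT, halfShift_powerSum_eval_neg hk,
      hk_odd.add_one.neg_one_pow, one_mul]
  · rw [hQ, hQ, powerSum_succ_sub_X_mul_eval_neg hk, hk_odd.neg_one_pow]
    ring
  · obtain ⟨m, rfl⟩ := hp
    rw [show (2 * m + 1 - 1) / 2 = m by omega] at hs ⊢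
    have hg := congrArg (eval ((2 * m + 1 : ℕ) : ℚ)) hgT
    rw [eval_mul, eval_X, halfShift_eval_two_mul_add_one] at hg
    rw [kernel_sum_eq_powerSum hk hs, hQ]
    simp only [U, eval_sub, eval_mul, eval_ofNat, halfShift_eval_two_mul_add_one]
    linear_combination (-2 * (s : ℚ)) * hg
end

section
/- The functions f_j : U → ℂ (for j ∈ ℤ) defined by f_j(e^{sπi/p}) = p^j, where U = { e^{sπi/p} : p odd, p > 1, gcd(s, 2p) = 1 }, are linearly independent over the field ℚ(A) of rational functions, where a rational function R acts on a function f by (R·f)(γ) = R(γ) f(γ), and two functions are identified if they agree at all but finitely many points of U. -/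
/-!
Clear denominators: with `Q` the product of the denominators of the `c j`, the polynomials
`g j = Q * c j` satisfy `∑ⱼ q ^ j * g j (ζ) = 0` at `ζ = exp (π i / q)` for all but finitely many
primes `q`. For large `q` the polynomial `∑ⱼ q ^ j • g j ∈ ℚ[X]` has degree below
`φ (2 q) = q - 1`, the degree of the minimal polynomial of `ζ`, so it is zero. Each of its
coefficients is then a Laurent polynomial in `q` with infinitely many zeros, so every `g j` is zero.
-/
open Complex Polynomial

theorem Finset.eq_zero_of_sum_mul_zpow_eq_zero {K : Type*} [Field K] {J : Finset ℤ} {a : ℤ → K}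
    (h : {x : K | x ≠ 0 ∧ ∑ j ∈ J, a j * x ^ j = 0}.Infinite) : ∀ j ∈ J, a j = 0 := by
  intro j hj
  set m := J.min' ⟨j, hj⟩
  have hm : ∀ k ∈ J, m ≤ k := fun k hk => J.min'_le k hk
  set P : K[X] := ∑ k ∈ J, C (a k) * X ^ (k - m).toNat
  have hP_eval {x : K} (hx : x ≠ 0) : x ^ m * P.eval x = ∑ k ∈ J, a k * x ^ k := by
    simp only [P, eval_finsetSum, eval_mul, eval_C, eval_pow, eval_X, Finset.mul_sum]
    refine Finset.sum_congr rfl fun k hk => ?_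
    rw [← zpow_natCast, Int.toNat_of_nonneg (sub_nonneg.2 (hm k hk)), mul_left_comm,
      ← zpow_add₀ hx, add_sub_cancel]
  have hP : P = 0 := P.eq_zero_of_infinite_isRoot <| h.mono fun x hx =>
    (mul_eq_zero.1 ((hP_eval hx.1).trans hx.2)).resolve_left (zpow_ne_zero _ hx.1)
  have hcoeff := congrArg (coeff · (j - m).toNat) hP
  simp only [P, finsetSum_coeff, coeff_C_mul, coeff_X_pow, coeff_zero] at hcoeff
  rwa [Finset.sum_eq_single j (fun k hk hkj => by grind) (absurd hj), if_pos rfl, mul_one] at hcoeff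

theorem Finset.eq_zero_of_sum_C_zpow_mul_eq_zero {K : Type*} [Field K] {J : Finset ℤ} {g : ℤ → K[X]}
    (h : {x : K | x ≠ 0 ∧ ∑ j ∈ J, C (x ^ j) * g j = 0}.Infinite) : ∀ j ∈ J, g j = 0 := by
  intro j hj
  ext n
  refine Finset.eq_zero_of_sum_mul_zpow_eq_zero (a := fun j => (g j).coeff n)
    (h.mono fun x hx => ⟨hx.1, ?_⟩) j hj
  simpa [finsetSum_coeff, mul_comm] using congrArg (coeff · n) hx.2

theorem isPrimitiveRoot_exp_pi_mul_I_div (n : ℕ) (hn : n ≠ 0) :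
    IsPrimitiveRoot (exp (Real.pi * I / n)) (2 * n) := by
  convert isPrimitiveRoot_exp (2 * n) (by positivity) using 2
  push_cast
  field_simp

theorem IsPrimitiveRoot.eq_zero_of_aeval_eq_zero_of_natDegree_lt {K : Type*} [Field K] [CharZero K]
    {ζ : K} {n : ℕ} (hζ : IsPrimitiveRoot ζ n) (hn : 0 < n) {P : ℚ[X]} (hP : aeval ζ P = 0)
    (hdeg : P.natDegree < n.totient) : P = 0 := by
  by_contra hne
  have := natDegree_le_of_dvd (minpoly.dvd ℚ ζ hP) hne
  rw [← cyclotomic_eq_minpoly_rat hζ hn, natDegree_cyclotomic] at this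
  omega

theorem eq_zero_of_aeval_exp_pi_mul_I_div_prime {q : ℕ} (hq : q.Prime) (hq2 : q ≠ 2) {P : ℚ[X]}
    (hP : aeval (exp (Real.pi * I / q)) P = 0) (hdeg : P.natDegree + 1 < q) : P = 0 := by
  refine (isPrimitiveRoot_exp_pi_mul_I_div q hq.ne_zero).eq_zero_of_aeval_eq_zero_of_natDegree_lt
    (by have := hq.pos; omega) hP ?_
  rw [Nat.totient_two_mul_of_odd (hq.odd_of_ne_two hq2), Nat.totient_prime hq]
  omega

noncomputable section

universe u

namespace RatFunc

variable {K L : Type u} {ι : Type*} [Field K] [Field L] (s : Finset ι) (c : ι → RatFunc K)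

def commonDenom : K[X] := ∏ i ∈ s, (c i).denom

def clearedNum [DecidableEq ι] (i : ι) : K[X] := (c i).num * ∏ k ∈ s.erase i, (c k).denom

variable {s c}

theorem commonDenom_ne_zero : commonDenom s c ≠ 0 :=
  Finset.prod_ne_zero_iff.2 fun i _ => denom_ne_zero (c i)

theorem eq_zero_of_clearedNum_eq_zero [DecidableEq ι] {i : ι} (h : clearedNum s c i = 0) :
    c i = 0 :=
  num_eq_zero_iff.1 <| (mul_eq_zero.1 h).resolve_right <|
    Finset.prod_ne_zero_iff.2 fun k _ => denom_ne_zero (c k)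

theorem eval₂_clearedNum [DecidableEq ι] {f : K →+* L} {x : L}
    (hx : (commonDenom s c).eval₂ f x ≠ 0) {i : ι} (hi : i ∈ s) :
    (clearedNum s c i).eval₂ f x = (c i).eval f x * (commonDenom s c).eval₂ f x := by
  rw [commonDenom, ← Finset.mul_prod_erase s _ hi, eval₂_mul] at hx ⊢
  rw [clearedNum, eval₂_mul, RatFunc.eval]
  field_simp [left_ne_zero_of_mul hx]

theorem eval₂_sum_C_mul_clearedNum [DecidableEq ι] {f : K →+* L} {x : L}
    (hx : (commonDenom s c).eval₂ f x ≠ 0) (a : ι → K) :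
    (∑ i ∈ s, Polynomial.C (a i) * clearedNum s c i).eval₂ f x =
      (commonDenom s c).eval₂ f x * ∑ i ∈ s, (c i).eval f x * f (a i) := by
  rw [eval₂_finsetSum, Finset.mul_sum]
  refine Finset.sum_congr rfl fun i hi => ?_
  rw [eval₂_mul, eval₂_C, eval₂_clearedNum hx hi]
  ring

end RatFunc

end

theorem injOn_exp_pi_mul_I_div : Set.InjOn (fun n : ℕ => exp (Real.pi * I / n)) {n | n ≠ 0} := by
  intro a ha b hb hab
  have := (isPrimitiveRoot_exp_pi_mul_I_div a ha).unique
    ((congrArg (IsPrimitiveRoot · _) hab).mpr (isPrimitiveRoot_exp_pi_mul_I_div b hb))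
  omega

theorem Set.Finite.setOf_exp_pi_mul_I_div_mem {B : Set ℂ} (hB : B.Finite) :
    {n : ℕ | n ≠ 0 ∧ exp (Real.pi * I / n) ∈ B}.Finite :=
  Set.Finite.of_finite_image (hB.subset <| Set.image_subset_iff.2 fun _ hn => hn.2)
    (injOn_exp_pi_mul_I_div.mono fun _ hn => hn.1)

theorem sum_C_zpow_mul_clearedNum_eq_zero {J : Finset ℤ} {c : ℤ → RatFunc ℚ} {q : ℕ}
    (hq : q.Prime) (hDq : (J.sup fun j => (RatFunc.clearedNum J c j).natDegree) + 2 < q)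
    (hQ : aeval (exp (Real.pi * I / q)) (RatFunc.commonDenom J c) ≠ 0)
    (hvanish : ∑ j ∈ J, (c j).eval (algebraMap ℚ ℂ) (exp (Real.pi * I / q)) * (q : ℂ) ^ j = 0) :
    ∑ j ∈ J, C ((q : ℚ) ^ j) * RatFunc.clearedNum J c j = 0 := by
  have hdeg : (∑ j ∈ J, C ((q : ℚ) ^ j) * RatFunc.clearedNum J c j).natDegree ≤
      J.sup fun j => (RatFunc.clearedNum J c j).natDegree :=
    natDegree_sum_le_of_forall_le _ _ fun j hj => (natDegree_C_mul_le _ _).trans <|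
      Finset.le_sup (f := fun j => (RatFunc.clearedNum J c j).natDegree) hj
  refine eq_zero_of_aeval_exp_pi_mul_I_div_prime hq (by omega) ?_ (by omega)
  rw [aeval_def] at hQ ⊢
  rw [RatFunc.eval₂_sum_C_mul_clearedNum hQ]
  simpa using Or.inr hvanish

/-- Linear independence over `ℚ(A)` of the functions `f_j` sending a primitive `2p`-th
root of unity `e^{sπi/p}` (for odd `p > 1`, `gcd(s,2p) = 1`) to `p^j`, where two
functions are identified if they agree away from a finite set, and a rational function
`R ∈ ℚ(A)` acts by pointwise evaluation: any finite `ℚ(A)`-linear combination of the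
`f_j` vanishing almost everywhere has all coefficients zero. -/
theorem powers_of_p_linearly_independent (c : ℤ →₀ RatFunc ℚ)
    (h : ∃ S : Set ℂ, S.Finite ∧
      ∀ p s : ℕ, Odd p → 1 < p → Nat.Coprime s (2*p) →
        Complex.exp (Real.pi * I * s / p) ∉ S →
          ∑ j ∈ c.support,
              (c j).eval (algebraMap ℚ ℂ) (Complex.exp (Real.pi * I * s / p)) * (p : ℂ)^(j : ℤ)
            = 0) :
    c = 0 := by
  obtain ⟨S, hS, hvanish⟩ := h
  set Q := RatFunc.commonDenom c.support c
  set g := RatFunc.clearedNum c.support c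
  set D := c.support.sup fun j => (g j).natDegree
  have hbad := (hS.union (Q.rootSet_finite ℂ)).setOf_exp_pi_mul_I_div_mem
  have hg : ∀ j ∈ c.support, g j = 0 := by
    refine Finset.eq_zero_of_sum_C_zpow_mul_eq_zero <| Set.Infinite.mono ?_ <|
      (Nat.infinite_setOfPred_prime.sdiff ((Set.finite_le_nat (D + 2)).union hbad)).image
        Nat.cast_injective.injOn
    rintro _ ⟨q, ⟨hq, hqD⟩, rfl⟩
    simp only [Set.mem_union, Set.mem_ofPred_eq, mem_rootSet, not_or, not_le, not_and] at hqD
    obtain ⟨hDq, hqS, hQ⟩ := hqD.imp_right (· hq.ne_zero)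
    refine ⟨by exact_mod_cast hq.ne_zero, sum_C_zpow_mul_clearedNum_eq_zero hq hDq
      (hQ RatFunc.commonDenom_ne_zero) ?_⟩
    simpa using hvanish q 1 (hq.odd_of_ne_two (by omega)) hq.one_lt (Nat.coprime_one_left _)
      (by simpa using hqS)
  ext j
  by_contra hj
  exact hj (RatFunc.eq_zero_of_clearedNum_eq_zero (hg j (Finsupp.mem_support_iff.2 hj)))
end

section
/- Let g ≥ 1 and let D_g^{(2c)} denote the Verlinde dimension given by the residue formula D_g^{(2c)} = ((−p)^g/2)·( 4^{1−g}·((2c+1)/p)·Res_{t=0}[ (2pt/(e^{2pt}−1)) · (s((2c+1)t)/s(t)^{2g−1}) · dt/t^{2g−1} ] − binom(c+g−1, 2g−2) ), where s(t) = sinh(t)/t. Then D_g^{(2c)} is a polynomial in p and c of total degree 3g−2, and its homogeneous part of degree 3g−2 equals (−1)^g p^{g−1} ∑_{k=0}^{2g−1} (B_k/(k!(2g−1−k)!)) c^{2g−1−k} p^k. -/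
/-!
With `p` and `c` indeterminates, `bSeries p = rescale p (bSeries 1)` and
`sSeries (2c+1) = rescale (2c+1) (sSeries 1)` make the residue the `t^{2g-2}` coefficient of a
power series over `ℚ[p, c]` whose `n`-th coefficient has total degree at most `n`; since
`(-p)^g / p = -(-p)^{g-1}`, `D_g^{(2c)}` is then a polynomial of degree at most `3g-2`.
On such power series, taking the degree-`n` part of the `n`-th coefficient is multiplicative.
Hence the top part of the residue is the `t^{2g-2}` coefficient of `bSeries p · sSeries (2c)`:
`s(t)^{1-2g}` only contributes its constant term `1`, and `2c+1` only its linear part `2c`.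
Multiplied by `2c`, `sSeries (2c)` becomes `sinh(2ct)`, the odd part of `e^{2ct}`, so only the
even Bernoulli numbers survive; the binomial term supplies the missing `B_1` term. The `k = 0`
term `(-1)^g p^{g-1} c^{2g-1} / (2g-1)!` never cancels, so the degree is exactly `3g-2`.
-/

open PowerSeries

/-- The even power series `s(at) = sinh(at)/(at) = ∑_k (at)^{2k}/(2k+1)!`, as a power
series in `t` with parameter `a`. -/
noncomputable def sSeries (a : ℚ) : PowerSeries ℚ :=
  PowerSeries.mk fun k => if Even k then a ^ k / (k + 1).factorial else 0

/-- The power series `2pt/(e^{2pt}−1) = ∑_k B_k (2p)^k t^k / k!`. -/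
noncomputable def bSeries (p : ℚ) : PowerSeries ℚ :=
  PowerSeries.mk fun k => bernoulli k * (2 * p) ^ k / k.factorial

/-- The residue at `t = 0` of `(2pt/(e^{2pt}−1)) · (s((2c+1)t)/s(t)^{2g−1}) · dt/t^{2g−1}`,
i.e. the coefficient of `t^{2g−2}` in `(2pt/(e^{2pt}−1)) · s((2c+1)t) / s(t)^{2g−1}`. -/
noncomputable def resTerm (g : ℕ) (p c : ℚ) : ℚ :=
  PowerSeries.coeff (R := ℚ) (2 * g - 2) (bSeries p * sSeries (2 * c + 1) * (sSeries 1 ^ (2 * g - 1))⁻¹)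

/-- The Verlinde number `D_g^{(2c)}` given by the residue formula. -/
noncomputable def Dval (g : ℕ) (p c : ℚ) : ℚ :=
  ((-p) ^ g / 2) * ((4 : ℚ) ^ (1 - (g : ℤ)) * ((2 * c + 1) / p) * resTerm g p c
    - (descPochhammer ℚ (2 * g - 2)).eval (c + g - 1) / (2 * g - 2).factorial)

namespace MvPolynomial

variable {σ R : Type*} [CommSemiring R]

theorem sum_range_homogeneousComponent_of_totalDegree_le {φ : MvPolynomial σ R} {n : ℕ}
    (h : φ.totalDegree ≤ n) :
    ∑ i ∈ Finset.range (n + 1), homogeneousComponent i φ = φ := by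
  rw [← Finset.sum_range_add_sum_Ico _ (Nat.succ_le_succ h), sum_homogeneousComponent,
    Finset.sum_eq_zero fun i hi => homogeneousComponent_eq_zero i φ (by simp at hi; omega),
    add_zero]

theorem homogeneousComponent_mul_of_totalDegree_le {f g : MvPolynomial σ R} {a b : ℕ}
    (hf : f.totalDegree ≤ a) (hg : g.totalDegree ≤ b) :
    homogeneousComponent (a + b) (f * g) =
      homogeneousComponent a f * homogeneousComponent b g := by
  have key : ∀ i ∈ Finset.range (a + 1), ∀ j ∈ Finset.range (b + 1),
      homogeneousComponent (a + b) (homogeneousComponent i f * homogeneousComponent j g) =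
        if i = a then if j = b then homogeneousComponent a f * homogeneousComponent b g else 0
        else 0 := by
    intro i hi j hj
    simp only [Finset.mem_range] at hi hj
    rw [homogeneousComponent_of_mem ((homogeneousComponent_isHomogeneous i f).mul
      (homogeneousComponent_isHomogeneous j g))]
    split_ifs <;> first | omega | simp_all
  conv_lhs => rw [← sum_range_homogeneousComponent_of_totalDegree_le hf,
    ← sum_range_homogeneousComponent_of_totalDegree_le hg, Finset.sum_mul_sum, map_sum]
  rw [Finset.sum_congr rfl fun i hi => (map_sum _ _ _).trans (Finset.sum_congr rfl (key i hi))]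
  simp [Finset.sum_ite_eq']

theorem homogeneousComponent_pow_of_totalDegree_le {f : MvPolynomial σ R} {d : ℕ}
    (hf : f.totalDegree ≤ d) (n : ℕ) :
    homogeneousComponent (n * d) (f ^ n) = homogeneousComponent d f ^ n := by
  induction n with
  | zero => simp [homogeneousComponent_zero]
  | succ n ih =>
    have hfn : (f ^ n).totalDegree ≤ n * d := (totalDegree_pow f n).trans (by gcongr)
    rw [pow_succ, pow_succ, add_mul, one_mul,
      homogeneousComponent_mul_of_totalDegree_le hfn hf, ih]

theorem totalDegree_mul_le_of_le {f g : MvPolynomial σ R} {a b : ℕ} (hf : f.totalDegree ≤ a)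
    (hg : g.totalDegree ≤ b) : (f * g).totalDegree ≤ a + b :=
  (totalDegree_mul f g).trans (add_le_add hf hg)

theorem totalDegree_add_C_le_one {l : MvPolynomial σ R} (hl : l.IsHomogeneous 1) (r : R) :
    (l + C r).totalDegree ≤ 1 :=
  (totalDegree_add _ _).trans (max_le hl.totalDegree_le (by simp))

theorem homogeneousComponent_one_add_C {l : MvPolynomial σ R} (hl : l.IsHomogeneous 1) (r : R) :
    homogeneousComponent 1 (l + C r) = l := by
  rw [map_add, homogeneousComponent_eq_self hl,
    homogeneousComponent_of_mem (isHomogeneous_C σ r), if_neg one_ne_zero, add_zero]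

theorem totalDegree_C_mul_le (r : R) (f : MvPolynomial σ R) :
    (C r * f).totalDegree ≤ f.totalDegree := by
  rw [C_mul']
  exact totalDegree_smul_le r f

theorem totalDegree_C_mul_pow_le {a : MvPolynomial σ R} (ha : a.totalDegree ≤ 1) (r : R)
    (n : ℕ) : (C r * a ^ n).totalDegree ≤ n :=
  calc (C r * a ^ n).totalDegree ≤ (a ^ n).totalDegree := totalDegree_C_mul_le r _
    _ ≤ n * a.totalDegree := totalDegree_pow a n
    _ ≤ n := by nlinarith

theorem homogeneousComponent_eval₂_C {a : MvPolynomial σ R} (ha : a.totalDegree ≤ 1)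
    (P : Polynomial R) :
    homogeneousComponent P.natDegree (P.eval₂ C a) =
      C P.leadingCoeff * homogeneousComponent 1 a ^ P.natDegree := by
  have hpow := homogeneousComponent_pow_of_totalDegree_le ha P.natDegree
  rw [mul_one] at hpow
  rw [Polynomial.eval₂_eq_sum_range, map_sum,
    Finset.sum_eq_single_of_mem _ (Finset.self_mem_range_succ _), homogeneousComponent_C_mul,
    hpow, Polynomial.leadingCoeff]
  intro i hi hne
  refine homogeneousComponent_eq_zero _ _ ((totalDegree_C_mul_pow_le ha _ i).trans_lt ?_)
  simp only [Finset.mem_range] at hi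
  omega

theorem totalDegree_eval₂_C_le {a : MvPolynomial σ R} (ha : a.totalDegree ≤ 1)
    (P : Polynomial R) : (P.eval₂ C a).totalDegree ≤ P.natDegree := by
  rw [Polynomial.eval₂_eq_sum_range]
  refine (totalDegree_finsetSum _ _).trans (Finset.sup_le fun i hi => ?_)
  exact (totalDegree_C_mul_pow_le ha _ i).trans (by simpa [Nat.lt_succ_iff] using hi)

end MvPolynomial

namespace PowerSeries

open MvPolynomial (totalDegree homogeneousComponent totalDegree_mul_le_of_le
  totalDegree_C_mul_pow_le homogeneousComponent_mul_of_totalDegree_le homogeneousComponent_C_mul)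

variable {σ R : Type*} [CommSemiring R]

def CoeffTotalDegreeLE (F : PowerSeries (MvPolynomial σ R)) : Prop :=
  ∀ n, (coeff n F).totalDegree ≤ n

noncomputable def topPart (F : PowerSeries (MvPolynomial σ R)) : PowerSeries (MvPolynomial σ R) :=
  mk fun n => homogeneousComponent n (coeff n F)

theorem coeff_topPart (F : PowerSeries (MvPolynomial σ R)) (n : ℕ) :
    coeff n (topPart F) = homogeneousComponent n (coeff n F) :=
  coeff_mk _ _

variable {F G : PowerSeries (MvPolynomial σ R)}

theorem CoeffTotalDegreeLE.mul (hF : CoeffTotalDegreeLE F) (hG : CoeffTotalDegreeLE G) :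
    CoeffTotalDegreeLE (F * G) := fun n => by
  rw [coeff_mul]
  refine (MvPolynomial.totalDegree_finsetSum _ _).trans (Finset.sup_le fun ij hij => ?_)
  rw [Finset.HasAntidiagonal.mem_antidiagonal] at hij
  exact hij ▸ totalDegree_mul_le_of_le (hF ij.1) (hG ij.2)

theorem topPart_mul (hF : CoeffTotalDegreeLE F) (hG : CoeffTotalDegreeLE G) :
    topPart (F * G) = topPart F * topPart G := by
  refine ext fun n => ?_
  simp only [coeff_topPart, coeff_mul, map_sum]
  refine Finset.sum_congr rfl fun ij hij => ?_
  rw [Finset.HasAntidiagonal.mem_antidiagonal] at hij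
  rw [← hij, homogeneousComponent_mul_of_totalDegree_le (hF ij.1) (hG ij.2)]

theorem coeffTotalDegreeLE_rescale_map_C {a : MvPolynomial σ R} (ha : a.totalDegree ≤ 1)
    (f : PowerSeries R) : CoeffTotalDegreeLE (rescale a (map MvPolynomial.C f)) := fun n => by
  rw [coeff_rescale, coeff_map, mul_comm]
  exact totalDegree_C_mul_pow_le ha _ n

theorem topPart_rescale_map_C {a : MvPolynomial σ R} (ha : a.totalDegree ≤ 1)
    (f : PowerSeries R) :
    topPart (rescale a (map MvPolynomial.C f)) =
      rescale (homogeneousComponent 1 a) (map MvPolynomial.C f) := by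
  have hpow := MvPolynomial.homogeneousComponent_pow_of_totalDegree_le ha
  simp only [mul_one] at hpow
  refine ext fun n => ?_
  rw [coeff_topPart, coeff_rescale, coeff_rescale, coeff_map, mul_comm,
    homogeneousComponent_C_mul, hpow, mul_comm]

theorem coeffTotalDegreeLE_map_C (f : PowerSeries R) :
    CoeffTotalDegreeLE (map (MvPolynomial.C (σ := σ)) f) :=
  fun n => by simp [coeff_map]

theorem topPart_map_C (f : PowerSeries R) :
    topPart (map (MvPolynomial.C (σ := σ)) f) = C (MvPolynomial.C (constantCoeff f)) := by
  refine ext fun n => ?_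
  rw [coeff_topPart, coeff_map, coeff_C,
    MvPolynomial.homogeneousComponent_of_mem (MvPolynomial.isHomogeneous_C σ _)]
  rcases n with _ | n <;> simp

theorem map_eval_map_C (x : σ → R) (f : PowerSeries R) :
    map (MvPolynomial.eval x) (map MvPolynomial.C f) = f :=
  ext fun n => by simp [coeff_map]

end PowerSeries

theorem sum_range_bernoulli_mul {n : ℕ} (hn : 1 < n) (f : ℕ → ℚ) :
    ∑ k ∈ Finset.range n, bernoulli k * f k =
      ∑ k ∈ Finset.range n, (if Even k then bernoulli k * f k else 0) - f 1 / 2 := by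
  have hterm : ∀ k, bernoulli k * f k =
      (if Even k then bernoulli k * f k else 0) + if k = 1 then -(f 1 / 2) else 0 := by
    intro k
    rcases Nat.even_or_odd k with hk | hk
    · have : k ≠ 1 := by rintro rfl; exact Nat.not_even_one hk
      simp [hk, this]
    · rcases Nat.lt_or_eq_of_le hk.pos with hk1 | rfl
      · simp [bernoulli_eq_zero_of_odd hk hk1, Nat.not_even_iff_odd.2 hk, hk1.ne']
      · norm_num [bernoulli_one]; ring
  rw [Finset.sum_congr rfl fun k _ => hterm k, Finset.sum_add_distrib,
    Finset.sum_ite_eq' _ _ (fun _ => _), if_pos (Finset.mem_range.2 hn), sub_eq_add_neg]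

theorem bSeries_eq_rescale (p : ℚ) : bSeries p = rescale p (bSeries 1) := by
  refine ext fun n => ?_
  simp only [bSeries, coeff_rescale, coeff_mk, mul_pow]
  ring

theorem sSeries_eq_rescale (a : ℚ) : sSeries a = rescale a (sSeries 1) := by
  refine ext fun n => ?_
  simp only [sSeries, coeff_rescale, coeff_mk, one_pow]
  split_ifs <;> simp [div_eq_mul_inv]

theorem constantCoeff_sSeries (a : ℚ) : constantCoeff (sSeries a) = 1 := by
  simp [sSeries, ← coeff_zero_eq_constantCoeff_apply]

theorem coeff_bSeries_mul_sSeries (m : ℕ) (p c : ℚ) :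
    c * coeff (2 * m) (bSeries p * sSeries (2 * c)) / 4 ^ m =
      ∑ k ∈ Finset.range (2 * m + 2),
        bernoulli k / (k.factorial * (2 * m + 1 - k).factorial) * p ^ k * c ^ (2 * m + 1 - k)
          + p * c ^ (2 * m) / (2 * m).factorial / 2 := by
  set f : ℕ → ℚ := fun k =>
    p ^ k * c ^ (2 * m + 1 - k) / (k.factorial * (2 * m + 1 - k).factorial)
  have hf1 : f 1 = p * c ^ (2 * m) / (2 * m).factorial := by simp [f]
  have hodd : ¬Even (2 * m + 1) := by simp
  rw [Finset.sum_congr rfl fun k _ => (by ring : _ = bernoulli k * f k),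
    sum_range_bernoulli_mul (by omega), Finset.sum_range_succ, if_neg hodd, hf1, add_zero,
    sub_add_cancel, div_eq_iff (by positivity), Finset.sum_mul, coeff_mul,
    Finset.Nat.sum_antidiagonal_eq_sum_range_succ_mk, Finset.mul_sum]
  refine Finset.sum_congr rfl fun i hi => ?_
  obtain ⟨j, hj⟩ : ∃ j, 2 * m = i + j := ⟨2 * m - i, by simp at hi; omega⟩
  have hji : 2 * m - i = j := by omega
  have hji' : 2 * m + 1 - i = j + 1 := by omega
  have hparity : Even j ↔ Even i := by
    simpa [Nat.even_add, iff_comm] using congrArg Even hj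
  have hfour : (4 : ℚ) ^ m = 2 ^ i * 2 ^ j := by rw [← pow_add, ← hj, pow_mul]; norm_num
  simp only [bSeries, sSeries, coeff_mk, hji, hji', f, hparity, hfour]
  split_ifs
  · field_simp
    ring
  · simp

namespace Verlinde

open MvPolynomial (totalDegree homogeneousComponent eval totalDegree_X totalDegree_sub
  totalDegree_mul_le_of_le totalDegree_add_C_le_one totalDegree_C_mul_le totalDegree_eval₂_C_le
  isHomogeneous_X isHomogeneous_X_pow homogeneousComponent_eq_zero homogeneousComponent_eq_self
  homogeneousComponent_C_mul homogeneousComponent_one_add_C homogeneousComponent_eval₂_C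
  homogeneousComponent_mul_of_totalDegree_le)

local notation "𝒑" => (MvPolynomial.X 0 : MvPolynomial (Fin 2) ℚ)
local notation "𝒄" => (MvPolynomial.X 1 : MvPolynomial (Fin 2) ℚ)

theorem isHomogeneous_two_mul_X : (MvPolynomial.C 2 * 𝒄).IsHomogeneous 1 :=
  MvPolynomial.isHomogeneous_C_mul_X 2 1

theorem totalDegree_X_pow_le (i : Fin 2) (n : ℕ) :
    (MvPolynomial.X i ^ n : MvPolynomial (Fin 2) ℚ).totalDegree ≤ n :=
  (isHomogeneous_X_pow i n).totalDegree_le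

noncomputable def residueSeries (m : ℕ) : PowerSeries (MvPolynomial (Fin 2) ℚ) :=
  rescale 𝒑 (map MvPolynomial.C (bSeries 1)) *
    rescale (MvPolynomial.C 2 * 𝒄 + MvPolynomial.C 1) (map MvPolynomial.C (sSeries 1)) *
    map MvPolynomial.C (sSeries 1 ^ (2 * m + 1))⁻¹

theorem eval_coeff_residueSeries (m : ℕ) (p c : ℚ) :
    eval ![p, c] (coeff (2 * m) (residueSeries m)) = resTerm (m + 1) p c := by
  have h2m : 2 * (m + 1) - 2 = 2 * m := by omega
  have h2m1 : 2 * (m + 1) - 1 = 2 * m + 1 := by omega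
  rw [← coeff_map, residueSeries, map_mul (map (eval ![p, c])), map_mul (map (eval ![p, c])),
    ← rescale_map, ← rescale_map, map_eval_map_C, map_eval_map_C, map_eval_map_C, resTerm,
    ← bSeries_eq_rescale, ← sSeries_eq_rescale, h2m, h2m1]
  simp

theorem totalDegree_coeff_residueSeries_le (m : ℕ) :
    (coeff (2 * m) (residueSeries m)).totalDegree ≤ 2 * m :=
  ((coeffTotalDegreeLE_rescale_map_C (totalDegree_X _).le _).mul
    (coeffTotalDegreeLE_rescale_map_C (totalDegree_add_C_le_one isHomogeneous_two_mul_X _) _)).mul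
    (coeffTotalDegreeLE_map_C _) (2 * m)

theorem topPart_residueSeries (m : ℕ) :
    topPart (residueSeries m) =
      rescale 𝒑 (map MvPolynomial.C (bSeries 1)) *
        rescale (MvPolynomial.C 2 * 𝒄) (map MvPolynomial.C (sSeries 1)) := by
  have hp : totalDegree 𝒑 ≤ 1 := (totalDegree_X _).le
  have hc := totalDegree_add_C_le_one isHomogeneous_two_mul_X 1
  rw [residueSeries, topPart_mul (coeffTotalDegreeLE_rescale_map_C hp _ |>.mul
      (coeffTotalDegreeLE_rescale_map_C hc _)) (coeffTotalDegreeLE_map_C _),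
    topPart_mul (coeffTotalDegreeLE_rescale_map_C hp _) (coeffTotalDegreeLE_rescale_map_C hc _),
    topPart_rescale_map_C hp, topPart_rescale_map_C hc, topPart_map_C,
    homogeneousComponent_one_add_C isHomogeneous_two_mul_X,
    homogeneousComponent_eq_self (isHomogeneous_X ℚ 0)]
  simp [constantCoeff_sSeries]

theorem eval_coeff_topPart_residueSeries (m : ℕ) (x : Fin 2 → ℚ) :
    eval x (coeff (2 * m) (topPart (residueSeries m))) =
      coeff (2 * m) (bSeries (x 0) * sSeries (2 * x 1)) := by
  rw [topPart_residueSeries, ← coeff_map, map_mul (map (eval x)), ← rescale_map,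
    ← rescale_map, map_eval_map_C, map_eval_map_C, ← bSeries_eq_rescale, ← sSeries_eq_rescale]
  simp

noncomputable def binomialNumerator (m : ℕ) : MvPolynomial (Fin 2) ℚ :=
  (descPochhammer ℚ (2 * m)).eval₂ MvPolynomial.C (𝒄 + MvPolynomial.C (m : ℚ))

theorem eval_binomialNumerator (m : ℕ) (p c : ℚ) :
    eval ![p, c] (binomialNumerator m) = (descPochhammer ℚ (2 * m)).eval (c + m) := by
  rw [binomialNumerator, Polynomial.hom_eval₂, Polynomial.eval,
    Subsingleton.elim ((eval ![p, c]).comp MvPolynomial.C) (.id ℚ)]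
  simp

theorem totalDegree_binomialNumerator_le (m : ℕ) :
    (binomialNumerator m).totalDegree ≤ 2 * m := by
  simpa [binomialNumerator, descPochhammer_natDegree] using totalDegree_eval₂_C_le
    (totalDegree_add_C_le_one (isHomogeneous_X ℚ (1 : Fin 2)) (m : ℚ))
    (descPochhammer ℚ (2 * m))

theorem homogeneousComponent_binomialNumerator (m : ℕ) :
    homogeneousComponent (2 * m) (binomialNumerator m) = 𝒄 ^ (2 * m) := by
  unfold binomialNumerator
  have := homogeneousComponent_eval₂_C
    (totalDegree_add_C_le_one (isHomogeneous_X ℚ (1 : Fin 2)) (m : ℚ))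
    (descPochhammer ℚ (2 * m))
  rwa [descPochhammer_natDegree, (monic_descPochhammer ℚ (2 * m)).leadingCoeff,
    MvPolynomial.C_1, one_mul,
    homogeneousComponent_one_add_C (isHomogeneous_X ℚ (1 : Fin 2))] at this

noncomputable def verlindePoly (m : ℕ) : MvPolynomial (Fin 2) ℚ :=
  MvPolynomial.C ((-1) ^ (m + 1) / 2) *
    (MvPolynomial.C (4 ^ m)⁻¹ *
        ((MvPolynomial.C 2 * 𝒄 + MvPolynomial.C 1) * 𝒑 ^ m * coeff (2 * m) (residueSeries m))
      - MvPolynomial.C ((2 * m).factorial : ℚ)⁻¹ * (𝒑 ^ (m + 1) * binomialNumerator m))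

theorem eval_verlindePoly (m : ℕ) {p : ℚ} (hp : p ≠ 0) (c : ℚ) :
    eval ![p, c] (verlindePoly m) = Dval (m + 1) p c := by
  have h2m : 2 * (m + 1) - 2 = 2 * m := by omega
  have hfour : (4 : ℚ) ^ (1 - ((m + 1 : ℕ) : ℤ)) = (4 ^ m)⁻¹ := by
    rw [show (1 : ℤ) - ((m + 1 : ℕ) : ℤ) = -(m : ℤ) by push_cast; ring, zpow_neg,
      zpow_natCast]
  simp only [verlindePoly, Dval, map_mul, map_sub, map_add, map_pow, MvPolynomial.eval_C,
    MvPolynomial.eval_X, Matrix.cons_val_zero, Matrix.cons_val_one, eval_coeff_residueSeries,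
    eval_binomialNumerator, hfour, h2m]
  rw [show c + ((m + 1 : ℕ) : ℚ) - 1 = c + m by push_cast; ring, neg_pow]
  field_simp
  ring

theorem totalDegree_verlindePoly_le (m : ℕ) : (verlindePoly m).totalDegree ≤ 3 * m + 1 := by
  have hA : ((MvPolynomial.C 2 * 𝒄 + MvPolynomial.C 1) * 𝒑 ^ m *
      coeff (2 * m) (residueSeries m)).totalDegree ≤ 1 + m + 2 * m :=
    totalDegree_mul_le_of_le (totalDegree_mul_le_of_le
      (totalDegree_add_C_le_one isHomogeneous_two_mul_X 1) (totalDegree_X_pow_le 0 m))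
      (totalDegree_coeff_residueSeries_le m)
  have hB : (𝒑 ^ (m + 1) * binomialNumerator m).totalDegree ≤ m + 1 + 2 * m :=
    totalDegree_mul_le_of_le (totalDegree_X_pow_le 0 _) (totalDegree_binomialNumerator_le m)
  refine (totalDegree_C_mul_le _ _).trans ((totalDegree_sub _ _).trans (max_le ?_ ?_))
  · exact (totalDegree_C_mul_le _ _).trans (hA.trans (by omega))
  · exact (totalDegree_C_mul_le _ _).trans (hB.trans (by omega))

noncomputable def verlindeTop (m : ℕ) : MvPolynomial (Fin 2) ℚ :=
  ∑ k ∈ Finset.range (2 * m + 2),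
    MvPolynomial.C ((-1) ^ (m + 1) * bernoulli k / (k.factorial * (2 * m + 1 - k).factorial)) *
      𝒑 ^ (m + k) * 𝒄 ^ (2 * m + 1 - k)

theorem homogeneousComponent_verlindePoly (m : ℕ) :
    homogeneousComponent (3 * m + 1) (verlindePoly m) = verlindeTop m := by
  have hlin := totalDegree_add_C_le_one isHomogeneous_two_mul_X (1 : ℚ)
  rw [verlindePoly, homogeneousComponent_C_mul, map_sub,
    homogeneousComponent_C_mul, homogeneousComponent_C_mul,
    show 3 * m + 1 = 1 + m + 2 * m by ring,
    homogeneousComponent_mul_of_totalDegree_le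
      (totalDegree_mul_le_of_le hlin (totalDegree_X_pow_le 0 m))
      (totalDegree_coeff_residueSeries_le m),
    homogeneousComponent_mul_of_totalDegree_le hlin (totalDegree_X_pow_le 0 m),
    show 1 + m + 2 * m = m + 1 + 2 * m by ring,
    homogeneousComponent_mul_of_totalDegree_le (totalDegree_X_pow_le 0 _)
      (totalDegree_binomialNumerator_le m),
    homogeneousComponent_one_add_C isHomogeneous_two_mul_X,
    homogeneousComponent_eq_self (isHomogeneous_X_pow _ _),
    homogeneousComponent_eq_self (isHomogeneous_X_pow _ _),
    homogeneousComponent_binomialNumerator, ← coeff_topPart]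
  refine MvPolynomial.funext fun x => ?_
  have key := coeff_bSeries_mul_sSeries m (x 0) (x 1)
  simp only [verlindeTop, map_mul, map_sub, map_sum, map_pow, MvPolynomial.eval_C,
    MvPolynomial.eval_X, eval_coeff_topPart_residueSeries]
  have hsum : ∑ k ∈ Finset.range (2 * m + 2), (-1) ^ (m + 1) * bernoulli k /
        (k.factorial * (2 * m + 1 - k).factorial) * x 0 ^ (m + k) * x 1 ^ (2 * m + 1 - k) =
      (-1) ^ (m + 1) * x 0 ^ m * ∑ k ∈ Finset.range (2 * m + 2), bernoulli k /
        (k.factorial * (2 * m + 1 - k).factorial) * x 0 ^ k * x 1 ^ (2 * m + 1 - k) := by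
    rw [Finset.mul_sum]
    exact Finset.sum_congr rfl fun k _ => by ring
  rw [hsum]
  linear_combination (-1) ^ (m + 1) * x 0 ^ m * key

theorem coeff_verlindeTop (m : ℕ) :
    MvPolynomial.coeff (Finsupp.single 0 m + Finsupp.single 1 (2 * m + 1)) (verlindeTop m) =
      (-1) ^ (m + 1) / (2 * m + 1).factorial := by
  have hmon : ∀ (a : ℚ) (i j : ℕ), MvPolynomial.C a * 𝒑 ^ i * 𝒄 ^ j =
      MvPolynomial.monomial (Finsupp.single 0 i + Finsupp.single 1 j) a := by
    intro a i j
    rw [MvPolynomial.X_pow_eq_monomial, MvPolynomial.X_pow_eq_monomial,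
      MvPolynomial.C_mul_monomial, MvPolynomial.monomial_mul, mul_one, mul_one]
  rw [verlindeTop, MvPolynomial.coeff_sum]
  simp only [hmon, MvPolynomial.coeff_monomial]
  rw [Finset.sum_eq_single_of_mem 0 (by simp)]
  · simp
  · intro k _ hk
    refine if_neg fun h => hk ?_
    simpa using DFunLike.congr_fun h 0

theorem verlindeTop_ne_zero (m : ℕ) : verlindeTop m ≠ 0 := fun h => by
  have := coeff_verlindeTop m
  rw [h, MvPolynomial.coeff_zero] at this
  exact absurd this.symm (by positivity)

theorem totalDegree_verlindePoly (m : ℕ) : (verlindePoly m).totalDegree = 3 * m + 1 := by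
  refine le_antisymm (totalDegree_verlindePoly_le m)
    (not_lt.1 fun hlt => verlindeTop_ne_zero m ?_)
  rw [← homogeneousComponent_verlindePoly, homogeneousComponent_eq_zero _ _ hlt]

end Verlinde

/-- `D_g^{(2c)}` is a polynomial in `p` and `c` of total degree `3g−2`, whose top-degree
homogeneous part is `(−1)^g p^{g−1} ∑_{k=0}^{2g−1} (B_k/(k!(2g−1−k)!)) c^{2g−1−k} p^k`. -/
theorem verlinde_top_homogeneous_part (g : ℕ) (hg : 1 ≤ g) :
    ∃ D : MvPolynomial (Fin 2) ℚ,
      (∀ p c : ℚ, p ≠ 0 → MvPolynomial.eval ![p, c] D = Dval g p c) ∧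
      D.totalDegree = 3 * g - 2 ∧
      MvPolynomial.homogeneousComponent (3 * g - 2) D
        = ∑ k ∈ Finset.range (2 * g),
            MvPolynomial.C ((-1) ^ g * bernoulli k
                / (k.factorial * (2 * g - 1 - k).factorial))
              * MvPolynomial.X 0 ^ (g - 1 + k) * MvPolynomial.X 1 ^ (2 * g - 1 - k) := by
  obtain ⟨m, rfl⟩ := Nat.exists_eq_add_of_le' hg
  have hdeg : 3 * (m + 1) - 2 = 3 * m + 1 := by omega
  refine ⟨Verlinde.verlindePoly m, fun p c hp => Verlinde.eval_verlindePoly m hp c,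
    hdeg ▸ Verlinde.totalDegree_verlindePoly m, ?_⟩
  rw [hdeg, Verlinde.homogeneousComponent_verlindePoly, Verlinde.verlindeTop,
    show 2 * (m + 1) = 2 * m + 2 by ring, show 2 * m + 2 - 1 = 2 * m + 1 by omega,
    Nat.add_sub_cancel]
end

section
/- Suppose the sequence of functions (D_g)_{g≥1} of (p,s) satisfies the recursion D_{g+1}(p,s) = ∑_{y=1}^{(p−1)/2} (p − 2 max(s,y)) min(s,y) · D_g(p,y) with D_1(p,s) = s. Then for every g ≥ 1, D_g(p,s) agrees (for all odd p ≥ 3 and 1 ≤ s ≤ (p−1)/2) with p^{g−1} times a two-variable polynomial in p and s that is even in p and odd in s. -/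
/-!
Split the kernel as `(p - 2 max(s,y)) min(s,y) = p min(s,y) - 2 s y`. If `D_g = p^(g-1) q(p,s)`,
and `α`, `γ` are the indefinite sums in the second variable of `y q(p,y)` and of `q(p,y)`, the
recursion sum becomes `p (α(p,s) + s (γ(p,k) - γ(p,s))) - 2 s α(p,k)` with `k = (p-1)/2`.
Indefinite sums of polynomials are polynomials (Faulhaber), and a polynomial is determined by its
backward difference and its value at `0`; comparing `F(-b)` with `±F(b-1)` this way shows that
summation turns odd functions of `b` into functions symmetric about `b = -1/2`, and even ones
vanishing at `0` into antisymmetric ones. This yields oddness in `s`, and shows that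
`p ↦ α(p, (p-1)/2)` is odd, hence `p` times an even polynomial. Evenness in `p` is inherited.
-/

open Finset Polynomial

section CharZeroDomain

variable {R : Type*} [CommRing R] [IsDomain R] [CharZero R]

theorem Polynomial.eq_C_eval_zero_of_eval_sub_one {w : R[X]}
    (h : ∀ x, w.eval (x - 1) = w.eval x) : w = C (w.eval 0) := by
  have hnat (n : ℕ) : w.eval (n : R) = w.eval 0 := by
    induction n with
    | zero => simp
    | succ n ih => rw [← ih, ← h, Nat.cast_succ, add_sub_cancel_right]
  refine eq_of_infinite_eval_eq _ _ (Set.infinite_of_injective_forall_mem Nat.cast_injective ?_)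
  intro n
  simp [hnat n]

theorem Polynomial.exists_eq_X_mul_of_odd {u : R[X]} (hu : ∀ x, u.eval (-x) = -u.eval x) :
    ∃ v : R[X], (∀ x, v.eval (-x) = v.eval x) ∧ ∀ x, u.eval x = x * v.eval x := by
  have hu0 : u.coeff 0 = 0 := by
    rw [coeff_zero_eq_eval_zero, ← self_eq_neg, ← hu, neg_zero]
  have hX (x : R) : u.eval x = x * u.divX.eval x := by
    simpa [hu0] using congrArg (eval x) (X_mul_divX_add u).symm
  refine ⟨u.divX, fun x => ?_, hX⟩
  rcases eq_or_ne x 0 with rfl | hx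
  · rw [neg_zero]
  · refine mul_left_cancel₀ (neg_ne_zero.2 hx) ?_
    rw [← hX, hu, hX, neg_mul]

end CharZeroDomain

-- From `B_{j+1}(x + 1) - B_{j+1}(x) = (j + 1) x ^ j`.
noncomputable def faulhaber (j : ℕ) : ℚ[X] :=
  C ((j + 1 : ℚ))⁻¹ *
    ((Polynomial.bernoulli (j + 1)).comp (X + 1) - C ((Polynomial.bernoulli (j + 1)).eval 1))

theorem faulhaber_eval_sub_eval_sub_one (j : ℕ) (x : ℚ) :
    (faulhaber j).eval x - (faulhaber j).eval (x - 1) = x ^ j := by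
  have hj : (j + 1 : ℚ) ≠ 0 := by positivity
  simp only [faulhaber, eval_mul, eval_C, eval_sub, eval_comp, eval_add, eval_X, eval_one,
    sub_add_cancel]
  rw [add_comm x, bernoulli_eval_one_add, Nat.add_sub_cancel]
  field_simp
  push_cast
  ring

theorem faulhaber_eval_zero (j : ℕ) : (faulhaber j).eval 0 = 0 := by
  simp [faulhaber]

noncomputable def polyFun₂ : Subalgebra ℚ (ℚ → ℚ → ℚ) :=
  (MvPolynomial.aeval (![fun a _ => a, fun _ b => b] : Fin 2 → ℚ → ℚ → ℚ)).range

namespace polyFun₂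

theorem mem_iff {f : ℚ → ℚ → ℚ} :
    f ∈ polyFun₂ ↔
      ∃ Q : MvPolynomial (Fin 2) ℚ, ∀ a b, f a b = MvPolynomial.eval ![a, b] Q := by
  have aeval_apply (Q : MvPolynomial (Fin 2) ℚ) (a b : ℚ) :
      MvPolynomial.aeval (![fun a _ => a, fun _ b => b] : Fin 2 → ℚ → ℚ → ℚ) Q a b
        = MvPolynomial.eval ![a, b] Q := by
    induction Q using MvPolynomial.induction_on with
    | C c => simp
    | add P Q hP hQ => simp [hP, hQ]
    | mul_X P i h => fin_cases i <;> simp [h]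
  constructor
  · rintro ⟨Q, rfl⟩
    exact ⟨Q, aeval_apply Q⟩
  · rintro ⟨Q, hQ⟩
    exact ⟨Q, funext₂ fun a b => (aeval_apply Q a b).trans (hQ a b).symm⟩

theorem fst_mem : (fun a _ => a) ∈ polyFun₂ :=
  mem_iff.2 ⟨MvPolynomial.X 0, fun _ _ => by simp⟩

theorem snd_mem : (fun _ b => b) ∈ polyFun₂ :=
  mem_iff.2 ⟨MvPolynomial.X 1, fun _ _ => by simp⟩

theorem polynomial_eval_mem (u : ℚ[X]) {g : ℚ → ℚ → ℚ} (hg : g ∈ polyFun₂) :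
    (fun a b => u.eval (g a b)) ∈ polyFun₂ := by
  obtain ⟨Q, hQ⟩ := mem_iff.1 hg
  refine mem_iff.2 ⟨aeval Q u, fun a b => ?_⟩
  induction u using Polynomial.induction_on' with
  | add u v hu hv => simp [hu, hv]
  | monomial n c => simp [hQ]

theorem comp_mem {f g h : ℚ → ℚ → ℚ} (hf : f ∈ polyFun₂) (hg : g ∈ polyFun₂)
    (hh : h ∈ polyFun₂) : (fun a b => f (g a b) (h a b)) ∈ polyFun₂ := by
  obtain ⟨P, hP⟩ := mem_iff.1 hf
  obtain ⟨Q, hQ⟩ := mem_iff.1 hg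
  obtain ⟨R, hR⟩ := mem_iff.1 hh
  refine mem_iff.2 ⟨MvPolynomial.bind₁ ![Q, R] P, fun a b => ?_⟩
  rw [hP, hQ, hR]
  clear hP
  induction P using MvPolynomial.induction_on with
  | C c => simp
  | add P P' hP hP' => simp [hP, hP']
  | mul_X P i h => fin_cases i <;> simp [h]

theorem comp_neg_snd_mem {F : ℚ → ℚ → ℚ} (hF : F ∈ polyFun₂) :
    (fun a b => F a (-b)) ∈ polyFun₂ :=
  comp_mem hF fst_mem (neg_mem snd_mem)

theorem comp_sub_one_snd_mem {F : ℚ → ℚ → ℚ} (hF : F ∈ polyFun₂) :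
    (fun a b => F a (b - 1)) ∈ polyFun₂ :=
  comp_mem hF fst_mem (sub_mem snd_mem (one_mem _))

theorem exists_polynomial_eval_eq {f : ℚ → ℚ → ℚ} (hf : f ∈ polyFun₂) (u v : ℚ[X]) :
    ∃ w : ℚ[X], ∀ x, f (u.eval x) (v.eval x) = w.eval x := by
  obtain ⟨P, hP⟩ := mem_iff.1 hf
  refine ⟨MvPolynomial.aeval ![u, v] P, fun x => ?_⟩
  rw [hP]
  clear hP
  induction P using MvPolynomial.induction_on with
  | C c => simp
  | add P P' hP hP' => simp [hP, hP']
  | mul_X P i h => fin_cases i <;> simp [h]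

end polyFun₂

structure IsIndefSum (F f : ℚ → ℚ → ℚ) : Prop where
  sub_eq : ∀ a b, F a b - F a (b - 1) = f a b
  eval_zero : ∀ a, F a 0 = 0

namespace IsIndefSum

variable {F G f g : ℚ → ℚ → ℚ}

theorem add (hF : IsIndefSum F f) (hG : IsIndefSum G g) :
    IsIndefSum (fun a b => F a b + G a b) (fun a b => f a b + g a b) where
  sub_eq a b := by rw [← hF.sub_eq, ← hG.sub_eq]; ring
  eval_zero a := by rw [hF.eval_zero, hG.eval_zero, add_zero]

theorem sum_Ioc (hF : IsIndefSum F f) (a : ℚ) {m n : ℕ} (hmn : m ≤ n) :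
    ∑ y ∈ Ioc m n, f a y = F a n - F a m := by
  induction n, hmn using Nat.le_induction with
  | base => simp
  | succ n hmn ih =>
    rw [sum_Ioc_succ_top hmn, ih, ← hF.sub_eq a (n + 1 : ℕ), Nat.cast_succ,
      add_sub_cancel_right]
    ring

theorem sum_Icc (hF : IsIndefSum F f) (a : ℚ) (n : ℕ) :
    ∑ y ∈ Icc 1 n, f a y = F a n := by
  rw [← zero_add 1, Icc_add_one_left_eq_Ioc, hF.sum_Ioc a n.zero_le, Nat.cast_zero,
    hF.eval_zero, sub_zero]

theorem unique (hF : IsIndefSum F f) (hG : IsIndefSum G f) (hFp : F ∈ polyFun₂)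
    (hGp : G ∈ polyFun₂) : F = G := by
  funext a b
  obtain ⟨w, hw⟩ := polyFun₂.exists_polynomial_eval_eq (sub_mem hFp hGp) (C a) X
  simp only [eval_C, eval_X, Pi.sub_apply] at hw
  have hper (x : ℚ) : w.eval (x - 1) = w.eval x := by
    rw [← hw, ← hw, ← sub_eq_zero]
    linear_combination hG.sub_eq a x - hF.sub_eq a x
  have h0 : w.eval 0 = 0 := by rw [← hw, hF.eval_zero, hG.eval_zero, sub_self]
  have hb := hw b
  rw [eq_C_eval_zero_of_eval_sub_one hper, h0, eval_C, sub_eq_zero] at hb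
  exact hb

theorem neg_fst (hF : IsIndefSum F f) (hFp : F ∈ polyFun₂) (hf : ∀ a b, f (-a) b = f a b) :
    ∀ a b, F (-a) b = F a b := by
  have hneg : IsIndefSum (fun a b => F (-a) b) f :=
    ⟨fun a b => by rw [hF.sub_eq, hf], fun a => hF.eval_zero _⟩
  have := hneg.unique hF
    (polyFun₂.comp_mem hFp (neg_mem polyFun₂.fst_mem) polyFun₂.snd_mem) hFp
  exact fun a b => congrFun₂ this a b

theorem neg_snd_of_odd (hF : IsIndefSum F f) (hFp : F ∈ polyFun₂)
    (hf : ∀ a b, f a (-b) = -f a b) : ∀ a b, F a (-b) = F a (b - 1) := by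
  have hf0 (a : ℚ) : f a 0 = 0 := by rw [← self_eq_neg, ← hf, neg_zero]
  have hrefl : IsIndefSum (fun a b => F a (-b)) fun a b => f a (b - 1) := by
    refine ⟨fun a b => ?_, fun a => by simp [hF.eval_zero]⟩
    have h := hF.sub_eq a (-(b - 1))
    rw [show -(b - 1) - 1 = -b by ring, hf] at h
    linarith
  have hshift : IsIndefSum (fun a b => F a (b - 1)) fun a b => f a (b - 1) := by
    refine ⟨fun a b => hF.sub_eq a (b - 1), fun a => ?_⟩
    have h := hF.sub_eq a 0
    rw [hF.eval_zero, hf0] at h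
    linarith
  have := hrefl.unique hshift (polyFun₂.comp_neg_snd_mem hFp)
    (polyFun₂.comp_sub_one_snd_mem hFp)
  exact fun a b => congrFun₂ this a b

theorem neg_snd_of_even (hF : IsIndefSum F f) (hFp : F ∈ polyFun₂)
    (hf : ∀ a b, f a (-b) = f a b) (hf0 : ∀ a, f a 0 = 0) :
    ∀ a b, F a (-b) = -F a (b - 1) := by
  have hrefl : IsIndefSum (fun a b => F a (-b)) fun a b => -f a (b - 1) := by
    refine ⟨fun a b => ?_, fun a => by simp [hF.eval_zero]⟩
    have h := hF.sub_eq a (-(b - 1))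
    rw [show -(b - 1) - 1 = -b by ring, hf] at h
    linarith
  have hshift : IsIndefSum (fun a b => -F a (b - 1)) fun a b => -f a (b - 1) := by
    refine ⟨fun a b => by linarith [hF.sub_eq a (b - 1)], fun a => ?_⟩
    have h := hF.sub_eq a 0
    rw [hF.eval_zero, hf0] at h
    linarith
  have := hrefl.unique hshift (polyFun₂.comp_neg_snd_mem hFp)
    (neg_mem (polyFun₂.comp_sub_one_snd_mem hFp))
  exact fun a b => congrFun₂ this a b

end IsIndefSum

theorem polyFun₂.exists_isIndefSum {f : ℚ → ℚ → ℚ} (hf : f ∈ polyFun₂) :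
    ∃ F ∈ polyFun₂, IsIndefSum F f := by
  obtain ⟨Q, hQ⟩ := polyFun₂.mem_iff.1 hf
  obtain rfl : f = fun a b => MvPolynomial.eval ![a, b] Q := funext₂ hQ
  clear hf hQ
  induction Q using MvPolynomial.induction_on' with
  | monomial m c =>
    refine ⟨fun a b => c * a ^ m 0 * (faulhaber (m 1)).eval b, ?_, ?_, ?_⟩
    · exact mul_mem (mul_mem (algebraMap_mem _ c) (pow_mem fst_mem _))
        (polynomial_eval_mem _ snd_mem)
    · intro a b
      rw [← mul_sub, faulhaber_eval_sub_eval_sub_one]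
      simp [MvPolynomial.eval_monomial, Finsupp.prod_fintype, mul_assoc]
    · intro a
      rw [faulhaber_eval_zero, mul_zero]
  | add P Q hP hQ =>
    obtain ⟨F, hFp, hF⟩ := hP
    obtain ⟨G, hGp, hG⟩ := hQ
    refine ⟨fun a b => F a b + G a b, add_mem hFp hGp, ?_⟩
    simpa using hF.add hG

theorem sum_Icc_min_mul {R : Type*} [CommSemiring R] (φ : ℕ → R) {s k : ℕ} (hsk : s ≤ k) :
    ∑ y ∈ Icc 1 k, ((min s y : ℕ) : R) * φ y
      = ∑ y ∈ Icc 1 s, y * φ y + s * ∑ y ∈ Ioc s k, φ y := by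
  have hIcc (n : ℕ) : Icc 1 n = Ioc 0 n := Icc_add_one_left_eq_Ioc 0 n
  rw [hIcc, hIcc, ← sum_Ioc_consecutive _ (Nat.zero_le s) hsk, mul_sum]
  congr 1
  · exact sum_congr rfl fun y hy => by rw [min_eq_right (mem_Ioc.1 hy).2]
  · exact sum_congr rfl fun y hy => by rw [min_eq_left (mem_Ioc.1 hy).1.le]

theorem IsIndefSum.sum_fusionKernel_mul {α γ f : ℚ → ℚ → ℚ}
    (hα : IsIndefSum α fun a b => b * f a b) (hγ : IsIndefSum γ f) (p : ℚ) {s k : ℕ}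
    (hsk : s ≤ k) :
    ∑ y ∈ Icc 1 k, (p - 2 * (max s y : ℕ)) * (min s y : ℕ) * f p y
      = p * (α p s + s * (γ p k - γ p s)) - 2 * s * α p k := by
  have hkernel (y : ℕ) : (p - 2 * (max s y : ℕ)) * (min s y : ℕ) * f p y
      = p * ((min s y : ℕ) * f p y) - 2 * s * (y * f p y) := by
    have h : ((max s y : ℕ) : ℚ) * (min s y : ℕ) = s * y := by exact_mod_cast max_mul_min s y
    linear_combination (-2 * f p y) * h
  rw [sum_congr rfl fun y _ => hkernel y, sum_sub_distrib, ← mul_sum, ← mul_sum,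
    sum_Icc_min_mul _ hsk, hα.sum_Icc, hα.sum_Icc, hγ.sum_Ioc p hsk]

theorem exists_fusion_step {f : ℚ → ℚ → ℚ} (hf : f ∈ polyFun₂)
    (heven : ∀ a b, f (-a) b = f a b) (hodd : ∀ a b, f a (-b) = -f a b) :
    ∃ f' ∈ polyFun₂, (∀ a b, f' (-a) b = f' a b) ∧ (∀ a b, f' a (-b) = -f' a b) ∧
      ∀ p s : ℕ, Odd p → s ≤ (p - 1) / 2 →
        ∑ y ∈ Icc 1 ((p - 1) / 2), ((p : ℚ) - 2 * (max s y : ℕ)) * (min s y : ℕ) * f p y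
          = p * f' p s := by
  obtain ⟨α, hαp, hα⟩ :=
    polyFun₂.exists_isIndefSum (f := fun a b => b * f a b) (mul_mem polyFun₂.snd_mem hf)
  obtain ⟨γ, hγp, hγ⟩ := polyFun₂.exists_isIndefSum hf
  have hα_fst := hα.neg_fst hαp fun a b => by rw [heven]
  have hγ_fst := hγ.neg_fst hγp heven
  have hα_snd := hα.neg_snd_of_even hαp (fun a b => by rw [hodd]; ring) fun a => zero_mul _
  have hγ_snd := hγ.neg_snd_of_odd hγp hodd
  have hhalf (a : ℚ) : (-a - 1) / 2 = -((a - 1) / 2 + 1) := by ring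
  obtain ⟨Γ, hΓ⟩ := polyFun₂.exists_polynomial_eval_eq hγp X (C 2⁻¹ * (X - 1))
  obtain ⟨β, hβ⟩ := polyFun₂.exists_polynomial_eval_eq hαp X (C 2⁻¹ * (X - 1))
  simp only [eval_X, eval_mul, eval_C, eval_sub, eval_one, ← div_eq_inv_mul] at hΓ hβ
  have hΓ_even (x : ℚ) : Γ.eval (-x) = Γ.eval x := by
    rw [← hΓ, ← hΓ, hγ_fst, hhalf, hγ_snd, add_sub_cancel_right]
  have hβ_odd (x : ℚ) : β.eval (-x) = -β.eval x := by
    rw [← hβ, ← hβ, hα_fst, hhalf, hα_snd, add_sub_cancel_right]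
  obtain ⟨ε, hε_even, hβε⟩ := exists_eq_X_mul_of_odd hβ_odd
  refine ⟨fun a b => α a b + b * (Γ.eval a - γ a b - 2 * ε.eval a), ?_, ?_, ?_, ?_⟩
  · open polyFun₂ in
    exact add_mem hαp (mul_mem snd_mem (sub_mem (sub_mem (polynomial_eval_mem Γ fst_mem) hγp)
      (mul_mem (algebraMap_mem polyFun₂ (2 : ℚ)) (polynomial_eval_mem ε fst_mem))))
  · intro a b
    simp only [hα_fst, hγ_fst, hΓ_even, hε_even]
  · intro a b
    dsimp only
    rw [hα_snd, hγ_snd]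
    linear_combination hα.sub_eq a b - b * hγ.sub_eq a b
  · intro p s hp hs
    obtain ⟨k, hk⟩ := hp
    have hk' : (p - 1) / 2 = k := by omega
    have hpk : ((p : ℚ) - 1) / 2 = k := by rw [hk]; push_cast; ring
    rw [hk'] at hs ⊢
    rw [hα.sum_fusionKernel_mul hγ _ hs, ← hpk, hβ, hΓ, hβε]
    ring

/-- If `(D_g)` satisfies the fusion recursion with `D_1(p,s) = s`, then `D_g(p,s)` agrees,
for odd `p ≥ 3` and `1 ≤ s ≤ (p−1)/2`, with `p^{g−1}` times a two-variable polynomial in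
`p` and `s` which is even in `p` and odd in `s`. -/
theorem verlinde_recursion_parity (D : ℕ → ℕ → ℕ → ℚ)
    (h1 : ∀ p s : ℕ, Odd p → 3 ≤ p → 1 ≤ s → s ≤ (p - 1) / 2 → D 1 p s = s)
    (hrec : ∀ g : ℕ, 1 ≤ g → ∀ p s : ℕ, Odd p → 3 ≤ p → 1 ≤ s → s ≤ (p - 1) / 2 →
      D (g + 1) p s
        = ∑ y ∈ Finset.Icc 1 ((p - 1) / 2),
            ((p : ℚ) - 2 * (max s y : ℕ)) * (min s y : ℕ) * D g p y) :
    ∀ g : ℕ, 1 ≤ g → ∃ Q : MvPolynomial (Fin 2) ℚ,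
      (∀ a b : ℚ, MvPolynomial.eval ![-a, b] Q = MvPolynomial.eval ![a, b] Q) ∧
      (∀ a b : ℚ, MvPolynomial.eval ![a, -b] Q = -MvPolynomial.eval ![a, b] Q) ∧
      ∀ p s : ℕ, Odd p → 3 ≤ p → 1 ≤ s → s ≤ (p - 1) / 2 →
        D g p s = (p : ℚ)^(g - 1) * MvPolynomial.eval ![(p : ℚ), (s : ℚ)] Q := by
  intro g hg
  induction g, hg using Nat.le_induction with
  | base =>
    refine ⟨MvPolynomial.X 1, by simp, by simp, fun p s hp hp3 hs1 hs => ?_⟩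
    simp [h1 p s hp hp3 hs1 hs]
  | succ g hg ih =>
    obtain ⟨Q, hQ_even, hQ_odd, hDQ⟩ := ih
    obtain ⟨f', hf'p, hf'_even, hf'_odd, hsum⟩ :=
      exists_fusion_step (polyFun₂.mem_iff.2 ⟨Q, fun _ _ => rfl⟩) hQ_even hQ_odd
    obtain ⟨Q', hQ'⟩ := polyFun₂.mem_iff.1 hf'p
    refine ⟨Q', fun a b => ?_, fun a b => ?_, fun p s hp hp3 hs1 hs => ?_⟩
    · rw [← hQ', ← hQ', hf'_even]
    · rw [← hQ', ← hQ', hf'_odd]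
    calc D (g + 1) p s
        = ∑ y ∈ Icc 1 ((p - 1) / 2), ((p : ℚ) - 2 * (max s y : ℕ)) * (min s y : ℕ) *
            ((p : ℚ) ^ (g - 1) * MvPolynomial.eval ![(p : ℚ), (y : ℚ)] Q) := by
          rw [hrec g hg p s hp hp3 hs1 hs]
          refine sum_congr rfl fun y hy => ?_
          rw [hDQ p y hp hp3 (mem_Icc.1 hy).1 (mem_Icc.1 hy).2]
      _ = (p : ℚ) ^ (g - 1) * (p * f' p s) := by
          rw [← hsum p s hp hs, mul_sum]
          exact sum_congr rfl fun y _ => by ring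
      _ = (p : ℚ) ^ (g + 1 - 1) * MvPolynomial.eval ![(p : ℚ), (s : ℚ)] Q' := by
          rw [hQ', ← mul_assoc, ← pow_succ, Nat.sub_add_cancel hg, Nat.add_sub_cancel]
end
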